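/- arXiv:2108.07300 — 4 statements merged into one kernel-verified Lean document; each statement's English description precedes it below -/
import Mathlib

section
/- For every u ∈ L²(I^d), the function 𝐊[u] : x ↦ ∫_{I^d} K(x,y) S(u(x), u(y)) dy belongs to L²(I^d), and ‖𝐊[u]‖²_{L²(I^d)} ≤ 3 A_S² K₁ + 3 B_S² (K₁ + K₂) ‖u‖²_{L²(I^d)}. -/
open MeasureTheory Set

noncomputable section

/-- The unit cube `I^d ⊆ ℝ^d`. -/
def unitCube (d : ℕ) : Set (Fin d → ℝ) := Set.Icc 0 1

/-- Lebesgue measure restricted to the unit cube. -/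
def cubeMeasure (d : ℕ) : Measure (Fin d → ℝ) := volume.restrict (unitCube d)

instance cubeMeasure_prob (d : ℕ) : IsProbabilityMeasure (cubeMeasure d) := by
  constructor
  rw [cubeMeasure, Measure.restrict_apply_univ, unitCube, Real.volume_Icc_pi]
  simp

/-- Cauchy–Schwarz inequality for integrals of real functions. -/
lemma cs_integral {α : Type*} [MeasurableSpace α] {μ : Measure α}
    {f g : α → ℝ} (hf : MemLp f 2 μ) (hg : MemLp g 2 μ) :
    (∫ a, f a * g a ∂μ) ^ 2 ≤ (∫ a, f a ^ 2 ∂μ) * (∫ a, g a ^ 2 ∂μ) := by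
  have hpq : (2:ℝ).HolderConjugate 2 := Real.HolderConjugate.two_two
  have h2 : (ENNReal.ofReal (2 : ℝ)) = 2 := by simp
  have hfa : MemLp (fun a => |f a|) (ENNReal.ofReal (2:ℝ)) μ := by
    rw [h2]; simpa [Real.norm_eq_abs] using hf.norm
  have hga : MemLp (fun a => |g a|) (ENNReal.ofReal (2:ℝ)) μ := by
    rw [h2]; simpa [Real.norm_eq_abs] using hg.norm
  have key := integral_mul_le_Lp_mul_Lq_of_nonneg hpq
    (Filter.Eventually.of_forall fun a => abs_nonneg (f a))
    (Filter.Eventually.of_forall fun a => abs_nonneg (g a)) hfa hga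
  have hA : (0 : ℝ) ≤ ∫ a, f a ^ 2 ∂μ := integral_nonneg fun a => sq_nonneg _
  have hB : (0 : ℝ) ≤ ∫ a, g a ^ 2 ∂μ := integral_nonneg fun a => sq_nonneg _
  have hval : ∀ x : ℝ, |x| ^ (2:ℝ) = x ^ 2 := by
    intro x
    rw [show (2:ℝ) = ((2:ℕ):ℝ) by norm_num, Real.rpow_natCast, sq_abs]
  have key2 : ∫ a, |f a| * |g a| ∂μ ≤
      (∫ a, f a ^ 2 ∂μ) ^ ((1:ℝ)/2) * (∫ a, g a ^ 2 ∂μ) ^ ((1:ℝ)/2) := by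
    have e1 : ∫ a, |f a| ^ (2:ℝ) ∂μ = ∫ a, f a ^ 2 ∂μ :=
      integral_congr_ae (Filter.Eventually.of_forall fun a => hval (f a))
    have e2 : ∫ a, |g a| ^ (2:ℝ) ∂μ = ∫ a, g a ^ 2 ∂μ :=
      integral_congr_ae (Filter.Eventually.of_forall fun a => hval (g a))
    rw [e1, e2] at key
    exact key
  have habs : |∫ a, f a * g a ∂μ| ≤ ∫ a, |f a| * |g a| ∂μ := by
    calc |∫ a, f a * g a ∂μ| ≤ ∫ a, ‖f a * g a‖ ∂μ := by
          simpa [Real.norm_eq_abs] using norm_integral_le_integral_norm (fun a => f a * g a) (μ := μ)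
      _ = ∫ a, |f a| * |g a| ∂μ := by simp [Real.norm_eq_abs, abs_mul]
  have hrw : ((∫ a, f a ^ 2 ∂μ) ^ ((1:ℝ)/2) * (∫ a, g a ^ 2 ∂μ) ^ ((1:ℝ)/2)) ^ 2 =
      (∫ a, f a ^ 2 ∂μ) * (∫ a, g a ^ 2 ∂μ) := by
    rw [mul_pow, ← Real.rpow_natCast ((∫ a, f a ^ 2 ∂μ) ^ ((1:ℝ)/2)) 2,
      ← Real.rpow_natCast ((∫ a, g a ^ 2 ∂μ) ^ ((1:ℝ)/2)) 2,
      ← Real.rpow_mul hA, ← Real.rpow_mul hB]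
    norm_num
  have h0 : (0:ℝ) ≤ ∫ a, |f a| * |g a| ∂μ := le_trans (abs_nonneg _) habs
  calc (∫ a, f a * g a ∂μ) ^ 2 = |∫ a, f a * g a ∂μ| ^ 2 := (sq_abs _).symm
    _ ≤ (∫ a, |f a| * |g a| ∂μ) ^ 2 := pow_le_pow_left₀ (abs_nonneg _) habs 2
    _ ≤ ((∫ a, f a ^ 2 ∂μ) ^ ((1:ℝ)/2) * (∫ a, g a ^ 2 ∂μ) ^ ((1:ℝ)/2)) ^ 2 :=
        pow_le_pow_left₀ h0 key2 2
    _ = _ := hrw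

/-- boundedness of the nonlocal operator
`𝐊[u](x) = ∫_{I^d} K(x,y) S(u(x),u(y)) dy` on `L²(I^d)`:
`𝐊[u] ∈ L²(I^d)` with `‖𝐊[u]‖² ≤ 3 A_S² K₁ + 3 B_S² (K₁+K₂) ‖u‖²`. -/
theorem nonlocal_operator_bound
    (d : ℕ) (hd : 1 ≤ d)
    (K : (Fin d → ℝ) → (Fin d → ℝ) → ℝ) (hKmeas : Measurable (Function.uncurry K))
    (K₁ K₂ : ℝ)
    (hK1 : ∀ᵐ x ∂cubeMeasure d,
      Integrable (fun y => (K x y) ^ 2) (cubeMeasure d) ∧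
        (∫ y, (K x y) ^ 2 ∂cubeMeasure d) ≤ K₁)
    (hK2 : ∀ᵐ y ∂cubeMeasure d,
      Integrable (fun x => (K x y) ^ 2) (cubeMeasure d) ∧
        (∫ x, (K x y) ^ 2 ∂cubeMeasure d) ≤ K₂)
    (S : ℝ → ℝ → ℝ) (hSmeas : Measurable (Function.uncurry S))
    (A_S B_S : ℝ) (hAS : 0 ≤ A_S) (hBS : 0 ≤ B_S)
    (hSbound : ∀ a b : ℝ, |S a b| ≤ A_S + B_S * (|a| + |b|))
    (u : (Fin d → ℝ) → ℝ) (humeas : Measurable u) (hu : MemLp u 2 (cubeMeasure d)) :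
    MemLp (fun x => ∫ y, K x y * S (u x) (u y) ∂cubeMeasure d) 2 (cubeMeasure d) ∧
      (∫ x, (∫ y, K x y * S (u x) (u y) ∂cubeMeasure d) ^ 2 ∂cubeMeasure d) ≤
        3 * A_S ^ 2 * K₁ +
          3 * B_S ^ 2 * (K₁ + K₂) * ∫ x, (u x) ^ 2 ∂cubeMeasure d := by
  set μ := cubeMeasure d with hμ
  have hu2 : Integrable (fun x => u x ^ 2) μ :=
    (memLp_two_iff_integrable_sq hu.aestronglyMeasurable).mp hu
  set c := ∫ x, u x ^ 2 ∂μ with hc_def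
  have hc : 0 ≤ c := integral_nonneg fun x => sq_nonneg _
  -- pointwise bound on S²
  have hSsq : ∀ a b : ℝ, (S a b) ^ 2 ≤ 3 * A_S ^ 2 + 3 * B_S ^ 2 * a ^ 2 + 3 * B_S ^ 2 * b ^ 2 := by
    intro a b
    have h := hSbound a b
    have h0 := abs_nonneg (S a b)
    nlinarith [sq_abs (S a b), sq_abs a, sq_abs b, sq_nonneg (A_S - B_S * |a|),
      sq_nonneg (A_S - B_S * |b|), sq_nonneg (B_S * |a| - B_S * |b|), abs_nonneg a, abs_nonneg b]
  -- measurability facts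
  have hKcurry : ∀ x, Measurable (fun y => K x y) := fun x =>
    hKmeas.comp measurable_prodMk_left
  have hScurry : ∀ x, Measurable (fun y => S (u x) (u y)) := fun x =>
    hSmeas.comp (measurable_const.prodMk humeas)
  have hKSmeas : StronglyMeasurable
      (Function.uncurry fun x y => K x y * S (u x) (u y)) := by
    apply Measurable.stronglyMeasurable
    exact hKmeas.mul (hSmeas.comp ((humeas.comp measurable_fst).prodMk
      (humeas.comp measurable_snd)))
  have hTmeas : StronglyMeasurable (fun x => ∫ y, K x y * S (u x) (u y) ∂μ) :=
    hKSmeas.integral_prod_right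
  have hK2meas : StronglyMeasurable (Function.uncurry fun x y => K x y ^ 2) :=
    (hKmeas.pow_const 2).stronglyMeasurable
  have hHmeas : StronglyMeasurable (fun x => ∫ y, K x y ^ 2 ∂μ) :=
    hK2meas.integral_prod_right
  have hHnonneg : ∀ x, 0 ≤ ∫ y, K x y ^ 2 ∂μ := fun x => integral_nonneg fun y => sq_nonneg _
  -- integrability of x ↦ ∫ K(x,y)² dy
  have hHint : Integrable (fun x => ∫ y, K x y ^ 2 ∂μ) μ := by
    apply Integrable.mono' (integrable_const K₁) hHmeas.aestronglyMeasurable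
    filter_upwards [hK1] with x hx
    rw [Real.norm_eq_abs, abs_of_nonneg (hHnonneg x)]
    exact hx.2
  -- Fubini bound : ∫ₓ ∫ᵧ K(x,y)² ≤ K₂
  have hHle : (∫ x, ∫ y, K x y ^ 2 ∂μ ∂μ) ≤ K₂ := by
    have hGmeas : StronglyMeasurable (fun y => ∫ x, K x y ^ 2 ∂μ) :=
      hK2meas.integral_prod_left
    have hGnonneg : ∀ y, 0 ≤ ∫ x, K x y ^ 2 ∂μ := fun y => integral_nonneg fun x => sq_nonneg _
    have hGint : Integrable (fun y => ∫ x, K x y ^ 2 ∂μ) μ := by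
      apply Integrable.mono' (integrable_const K₂) hGmeas.aestronglyMeasurable
      filter_upwards [hK2] with y hy
      rw [Real.norm_eq_abs, abs_of_nonneg (hGnonneg y)]
      exact hy.2
    have hF2int : Integrable (Function.uncurry fun x y => K x y ^ 2) (μ.prod μ) := by
      rw [integrable_prod_iff' hK2meas.aestronglyMeasurable]
      constructor
      · filter_upwards [hK2] with y hy using hy.1
      · apply hGint.congr
        refine Filter.Eventually.of_forall fun y => ?_
        refine integral_congr_ae (Filter.Eventually.of_forall fun x => ?_)
        simp [Function.uncurry, Real.norm_eq_abs, abs_of_nonneg (sq_nonneg (K x y))]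
    have hswap := integral_integral_swap hF2int
    rw [hswap]
    calc (∫ y, ∫ x, K x y ^ 2 ∂μ ∂μ) ≤ ∫ _, K₂ ∂μ := by
          apply integral_mono_ae hGint (integrable_const K₂)
          filter_upwards [hK2] with y hy using hy.2
      _ = K₂ := by simp
  -- pointwise (a.e.) bound on the squared operator
  have hmain : ∀ᵐ x ∂μ,
      (∫ y, K x y * S (u x) (u y) ∂μ) ^ 2 ≤
        K₁ * (3 * A_S ^ 2 + 3 * B_S ^ 2 * u x ^ 2) + 3 * B_S ^ 2 * c * ∫ y, K x y ^ 2 ∂μ := by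
    filter_upwards [hK1] with x hx
    obtain ⟨hKx2int, hKxle⟩ := hx
    have hKxL2 : MemLp (fun y => K x y) 2 μ :=
      (memLp_two_iff_integrable_sq (hKcurry x).aestronglyMeasurable).mpr hKx2int
    have hGint : Integrable
        (fun y => 3 * A_S ^ 2 + 3 * B_S ^ 2 * u x ^ 2 + 3 * B_S ^ 2 * u y ^ 2) μ :=
      (integrable_const _).add (hu2.const_mul _)
    have hSx2int : Integrable (fun y => S (u x) (u y) ^ 2) μ := by
      apply Integrable.mono' hGint ((hScurry x).pow_const 2).aestronglyMeasurable
      refine Filter.Eventually.of_forall fun y => ?_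
      rw [Real.norm_eq_abs, abs_of_nonneg (sq_nonneg _)]
      exact hSsq (u x) (u y)
    have hSxL2 : MemLp (fun y => S (u x) (u y)) 2 μ :=
      (memLp_two_iff_integrable_sq (hScurry x).aestronglyMeasurable).mpr hSx2int
    have hCS := cs_integral hKxL2 hSxL2
    have hS2le : (∫ y, S (u x) (u y) ^ 2 ∂μ) ≤
        3 * A_S ^ 2 + 3 * B_S ^ 2 * u x ^ 2 + 3 * B_S ^ 2 * c := by
      calc (∫ y, S (u x) (u y) ^ 2 ∂μ)
          ≤ ∫ y, 3 * A_S ^ 2 + 3 * B_S ^ 2 * u x ^ 2 + 3 * B_S ^ 2 * u y ^ 2 ∂μ :=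
            integral_mono hSx2int hGint fun y => hSsq (u x) (u y)
        _ = 3 * A_S ^ 2 + 3 * B_S ^ 2 * u x ^ 2 + 3 * B_S ^ 2 * c := by
            rw [integral_add (integrable_const _) (hu2.const_mul _), integral_const,
              integral_const_mul]
            simp [hc_def]
    have hS2nonneg : (0:ℝ) ≤ ∫ y, S (u x) (u y) ^ 2 ∂μ := integral_nonneg fun y => sq_nonneg _
    have hP : (0:ℝ) ≤ 3 * A_S ^ 2 + 3 * B_S ^ 2 * u x ^ 2 := by positivity
    have hQ : (0:ℝ) ≤ 3 * B_S ^ 2 * c := by positivity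
    nlinarith [hHnonneg x, mul_le_mul_of_nonneg_left hKxle hP,
      mul_le_mul_of_nonneg_right hS2le (hHnonneg x),
      mul_le_mul_of_nonneg_left hS2nonneg (hHnonneg x)]
  -- the bounding function is integrable
  have hφint : Integrable (fun x =>
      K₁ * (3 * A_S ^ 2 + 3 * B_S ^ 2 * u x ^ 2) + 3 * B_S ^ 2 * c * ∫ y, K x y ^ 2 ∂μ) μ := by
    apply Integrable.add
    · apply Integrable.const_mul
      exact (integrable_const _).add (hu2.const_mul _)
    · exact hHint.const_mul _
  -- integrability of the squared operator
  have hT2int : Integrable (fun x => (∫ y, K x y * S (u x) (u y) ∂μ) ^ 2) μ := by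
    apply Integrable.mono' hφint (hTmeas.pow 2).aestronglyMeasurable
    filter_upwards [hmain] with x hx
    rw [Real.norm_eq_abs, abs_of_nonneg (sq_nonneg _)]
    exact hx
  refine ⟨(memLp_two_iff_integrable_sq hTmeas.aestronglyMeasurable).mpr hT2int, ?_⟩
  calc (∫ x, (∫ y, K x y * S (u x) (u y) ∂μ) ^ 2 ∂μ)
      ≤ ∫ x, K₁ * (3 * A_S ^ 2 + 3 * B_S ^ 2 * u x ^ 2)
          + 3 * B_S ^ 2 * c * ∫ y, K x y ^ 2 ∂μ ∂μ :=
        integral_mono_ae hT2int hφint hmain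
    _ = K₁ * (3 * A_S ^ 2 + 3 * B_S ^ 2 * c)
          + 3 * B_S ^ 2 * c * ∫ x, ∫ y, K x y ^ 2 ∂μ ∂μ := by
        have hint1 : Integrable (fun x => K₁ * (3 * A_S ^ 2 + 3 * B_S ^ 2 * u x ^ 2)) μ := by
          apply Integrable.const_mul
          exact (integrable_const _).add (hu2.const_mul _)
        have hint0 : Integrable (fun x => (3 : ℝ) * A_S ^ 2 + 3 * B_S ^ 2 * u x ^ 2) μ :=
          (integrable_const _).add (hu2.const_mul _)
        rw [integral_add hint1 (hHint.const_mul _), integral_const_mul, integral_const_mul,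
          integral_add (integrable_const _) (hu2.const_mul _), integral_const,
          integral_const_mul]
        simp [hc_def]
    _ ≤ 3 * A_S ^ 2 * K₁ + 3 * B_S ^ 2 * (K₁ + K₂) * c := by
        have := mul_le_mul_of_nonneg_left hHle (by positivity : (0:ℝ) ≤ 3 * B_S ^ 2 * c)
        nlinarith
end
end

section
/- For all u, v ∈ L²(I^d), ‖𝐊[u] − 𝐊[v]‖²_{L²(I^d)} ≤ 2 L_S² (K₁ + K₂) ‖u − v‖²_{L²(I^d)}. -/
open MeasureTheory Set

noncomputable section

variable {α : Type*} [MeasurableSpace α] {μ : Measure α}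

private lemma mulL1 {f g : α → ℝ} (hf : MemLp f 2 μ) (hg : MemLp g 2 μ) :
    Integrable (fun x => f x * g x) μ := by
  have h : MemLp (f • g) 1 μ := hg.smul hf
  rw [← memLp_one_iff_integrable]
  exact h

private lemma sq_int_le [IsProbabilityMeasure μ] {f : α → ℝ} (hf : MemLp f 2 μ) :
    (∫ x, f x ∂μ) ^ 2 ≤ ∫ x, f x ^ 2 ∂μ := by
  have h := ProbabilityTheory.variance_nonneg f μ
  rw [ProbabilityTheory.variance_eq_sub hf] at h
  simp only [Pi.pow_apply] at h
  linarith

instance cubeProb (d : ℕ) : IsProbabilityMeasure (cubeMeasure d) := by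
  constructor
  rw [cubeMeasure, unitCube, Measure.restrict_apply_univ, Real.volume_Icc_pi]
  simp

/-- Lipschitz estimate for the nonlocal operator
`𝐊[u](x) = ∫_{I^d} K(x,y) S(u(x),u(y)) dy` on `L²(I^d)`:
`‖𝐊[u] − 𝐊[v]‖² ≤ 2 L_S² (K₁+K₂) ‖u − v‖²`. -/
theorem nonlocal_operator_lipschitz
    (d : ℕ) (hd : 1 ≤ d)
    (K : (Fin d → ℝ) → (Fin d → ℝ) → ℝ) (hKmeas : Measurable (Function.uncurry K))
    (K₁ K₂ : ℝ)
    (hK1 : ∀ᵐ x ∂cubeMeasure d,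
      Integrable (fun y => (K x y) ^ 2) (cubeMeasure d) ∧
        (∫ y, (K x y) ^ 2 ∂cubeMeasure d) ≤ K₁)
    (hK2 : ∀ᵐ y ∂cubeMeasure d,
      Integrable (fun x => (K x y) ^ 2) (cubeMeasure d) ∧
        (∫ x, (K x y) ^ 2 ∂cubeMeasure d) ≤ K₂)
    (S : ℝ → ℝ → ℝ)
    (A_S B_S L_S : ℝ) (hAS : 0 ≤ A_S) (hBS : 0 ≤ B_S) (hLS : 0 ≤ L_S)
    (hSbound : ∀ a b : ℝ, |S a b| ≤ A_S + B_S * (|a| + |b|))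
    (hSlip : ∀ a b a' b' : ℝ, |S a b - S a' b'| ≤ L_S * (|a - a'| + |b - b'|))
    (u v : (Fin d → ℝ) → ℝ) (humeas : Measurable u) (hvmeas : Measurable v)
    (hu : MemLp u 2 (cubeMeasure d)) (hv : MemLp v 2 (cubeMeasure d)) :
    (∫ x, ((∫ y, K x y * S (u x) (u y) ∂cubeMeasure d) -
        ∫ y, K x y * S (v x) (v y) ∂cubeMeasure d) ^ 2 ∂cubeMeasure d) ≤
      2 * L_S ^ 2 * (K₁ + K₂) * ∫ x, (u x - v x) ^ 2 ∂cubeMeasure d := by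
  set μ := cubeMeasure d with hμdef
  have hw : MemLp (fun x => u x - v x) 2 μ := hu.sub hv
  have hwmeas : Measurable (fun x => u x - v x) := humeas.sub hvmeas
  have hwsq : Integrable (fun x => (u x - v x) ^ 2) μ := hw.integrable_sq
  have huA : MemLp (fun y => |u y|) 2 μ := by simpa using hu.norm
  have hvA : MemLp (fun y => |v y|) 2 μ := by simpa using hv.norm
  have hwA : MemLp (fun y => |u y - v y|) 2 μ := by simpa using hw.norm
  have hKm : Measurable (fun p : ((Fin d → ℝ) × (Fin d → ℝ)) => K p.1 p.2) := hKmeas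
  -- S is continuous, hence the compositions are measurable
  have hSmeas : Measurable (fun p : ℝ × ℝ => S p.1 p.2) := by
    have : LipschitzWith (Real.toNNReal (2 * L_S)) (fun p : ℝ × ℝ => S p.1 p.2) := by
      apply LipschitzWith.of_dist_le_mul
      intro p q
      have h1 : |p.1 - q.1| ≤ dist p q := by
        rw [← Real.dist_eq, Prod.dist_eq]; exact le_max_left _ _
      have h2 : |p.2 - q.2| ≤ dist p q := by
        rw [← Real.dist_eq, Prod.dist_eq]; exact le_max_right _ _
      have hco : (Real.toNNReal (2 * L_S) : ℝ) = 2 * L_S :=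
        Real.coe_toNNReal _ (by positivity)
      rw [Real.dist_eq, hco]
      calc |S p.1 p.2 - S q.1 q.2| ≤ L_S * (|p.1 - q.1| + |p.2 - q.2|) := hSlip _ _ _ _
        _ ≤ L_S * (dist p q + dist p q) := by
            apply mul_le_mul_of_nonneg_left (by linarith) hLS
        _ = 2 * L_S * dist p q := by ring
    exact this.continuous.measurable
  -- integrability on the product
  have hFm : AEStronglyMeasurable
      (fun p : ((Fin d → ℝ) × (Fin d → ℝ)) => K p.1 p.2 ^ 2 * (u p.2 - v p.2) ^ 2)
      (μ.prod μ) :=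
    ((hKm.pow_const 2).mul ((hwmeas.comp measurable_snd).pow_const 2)).aestronglyMeasurable
  have hF : Integrable
      (fun p : ((Fin d → ℝ) × (Fin d → ℝ)) => K p.1 p.2 ^ 2 * (u p.2 - v p.2) ^ 2)
      (μ.prod μ) := by
    rw [integrable_prod_iff' hFm]
    constructor
    · filter_upwards [hK2] with y hy
      exact hy.1.mul_const _
    · have hFsm : StronglyMeasurable
          (fun p : ((Fin d → ℝ) × (Fin d → ℝ)) => ‖K p.1 p.2 ^ 2 * (u p.2 - v p.2) ^ 2‖) :=
        (((hKm.pow_const 2).mul ((hwmeas.comp measurable_snd).pow_const 2)).norm).stronglyMeasurable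
      apply Integrable.mono' (hwsq.const_mul K₂) hFsm.integral_prod_left'.aestronglyMeasurable
      filter_upwards [hK2] with y hy
      have h1 : ∀ x, ‖K x y ^ 2 * (u y - v y) ^ 2‖ = K x y ^ 2 * (u y - v y) ^ 2 :=
        fun x => by rw [Real.norm_eq_abs, abs_of_nonneg (by positivity)]
      have h2 : 0 ≤ ∫ x, ‖K x y ^ 2 * (u y - v y) ^ 2‖ ∂μ :=
        integral_nonneg fun x => norm_nonneg _
      rw [Real.norm_eq_abs, abs_of_nonneg h2]
      simp_rw [h1]
      rw [integral_mul_const]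
      exact mul_le_mul_of_nonneg_right hy.2 (sq_nonneg _)
  have hFx : ∀ᵐ x ∂μ, Integrable (fun y => K x y ^ 2 * (u y - v y) ^ 2) μ :=
    hF.prod_right_ae
  have hFI : Integrable (fun x => ∫ y, K x y ^ 2 * (u y - v y) ^ 2 ∂μ) μ :=
    hF.integral_prod_left
  have hswap : ∫ x, (∫ y, K x y ^ 2 * (u y - v y) ^ 2 ∂μ) ∂μ
      = ∫ y, (∫ x, K x y ^ 2 * (u y - v y) ^ 2 ∂μ) ∂μ :=
    integral_integral_swap hF
  have hinner : ∫ y, (∫ x, K x y ^ 2 * (u y - v y) ^ 2 ∂μ) ∂μ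
      ≤ K₂ * ∫ x, (u x - v x) ^ 2 ∂μ := by
    calc ∫ y, (∫ x, K x y ^ 2 * (u y - v y) ^ 2 ∂μ) ∂μ
        ≤ ∫ y, K₂ * (u y - v y) ^ 2 ∂μ := by
          apply integral_mono_of_nonneg
          · filter_upwards with y
            exact integral_nonneg fun x => by positivity
          · exact hwsq.const_mul K₂
          · filter_upwards [hK2] with y hy
            rw [integral_mul_const]
            exact mul_le_mul_of_nonneg_right hy.2 (sq_nonneg _)
      _ = K₂ * ∫ x, (u x - v x) ^ 2 ∂μ := integral_const_mul _ _
  -- the pointwise bound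
  have hpt : ∀ᵐ x ∂μ, ((∫ y, K x y * S (u x) (u y) ∂μ) - ∫ y, K x y * S (v x) (v y) ∂μ) ^ 2
      ≤ 2 * L_S ^ 2 * (K₁ * (u x - v x) ^ 2 + ∫ y, K x y ^ 2 * (u y - v y) ^ 2 ∂μ) := by
    filter_upwards [hK1, hFx] with x hx hfx
    have hKxm : Measurable (K x) := hKmeas.of_uncurry_left
    have hKx2 : MemLp (K x) 2 μ :=
      (memLp_two_iff_integrable_sq hKxm.aestronglyMeasurable).2 hx.1
    have hKxA : MemLp (fun y => |K x y|) 2 μ := by simpa using hKx2.norm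
    have hSuMeas : Measurable (fun y => S (u x) (u y)) :=
      hSmeas.comp (measurable_const.prodMk humeas)
    have hSvMeas : Measurable (fun y => S (v x) (v y)) :=
      hSmeas.comp (measurable_const.prodMk hvmeas)
    have hSu2 : MemLp (fun y => S (u x) (u y)) 2 μ := by
      have hg : MemLp (fun y => (A_S + B_S * |u x|) + B_S * |u y|) 2 μ :=
        by
          have h1 := (memLp_const (μ := μ) (p := 2) (A_S + B_S * |u x|)).add (huA.const_mul B_S)
          exact h1
      apply hg.of_le hSuMeas.aestronglyMeasurable
      filter_upwards with y
      rw [Real.norm_eq_abs, Real.norm_eq_abs]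
      refine (hSbound _ _).trans ?_
      have h : A_S + B_S * (|u x| + |u y|) = (A_S + B_S * |u x|) + B_S * |u y| := by ring
      rw [h]; exact le_abs_self _
    have hSv2 : MemLp (fun y => S (v x) (v y)) 2 μ := by
      have hg : MemLp (fun y => (A_S + B_S * |v x|) + B_S * |v y|) 2 μ :=
        by
          have h1 := (memLp_const (μ := μ) (p := 2) (A_S + B_S * |v x|)).add (hvA.const_mul B_S)
          exact h1
      apply hg.of_le hSvMeas.aestronglyMeasurable
      filter_upwards with y
      rw [Real.norm_eq_abs, Real.norm_eq_abs]
      refine (hSbound _ _).trans ?_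
      have h : A_S + B_S * (|v x| + |v y|) = (A_S + B_S * |v x|) + B_S * |v y| := by ring
      rw [h]; exact le_abs_self _
    have hiu : Integrable (fun y => K x y * S (u x) (u y)) μ := mulL1 hKx2 hSu2
    have hiv : Integrable (fun y => K x y * S (v x) (v y)) μ := mulL1 hKx2 hSv2
    have hW2 : MemLp (fun y => L_S * (|u x - v x| + |u y - v y|)) 2 μ :=
      (((memLp_const (μ := μ) (p := 2) |u x - v x|).add hwA).const_mul L_S)
    have hB : Integrable (fun y => |K x y| * (L_S * (|u x - v x| + |u y - v y|))) μ :=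
      mulL1 hKxA hW2
    have hIK : Integrable (fun y => |K x y|) μ := (hKx2.integrable one_le_two).abs
    have hIKw : Integrable (fun y => |K x y| * |u y - v y|) μ := mulL1 hKxA hwA
    have hdiff : (∫ y, K x y * S (u x) (u y) ∂μ) - ∫ y, K x y * S (v x) (v y) ∂μ
        = ∫ y, (K x y * S (u x) (u y) - K x y * S (v x) (v y)) ∂μ :=
      (integral_sub hiu hiv).symm
    have habs : |∫ y, (K x y * S (u x) (u y) - K x y * S (v x) (v y)) ∂μ|
        ≤ ∫ y, |K x y| * (L_S * (|u x - v x| + |u y - v y|)) ∂μ := by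
      calc |∫ y, (K x y * S (u x) (u y) - K x y * S (v x) (v y)) ∂μ|
          ≤ ∫ y, |K x y * S (u x) (u y) - K x y * S (v x) (v y)| ∂μ := by
            simpa [Real.norm_eq_abs] using
              norm_integral_le_integral_norm
                (fun y => K x y * S (u x) (u y) - K x y * S (v x) (v y)) (μ := μ)
        _ ≤ ∫ y, |K x y| * (L_S * (|u x - v x| + |u y - v y|)) ∂μ := by
            apply integral_mono_of_nonneg (Filter.Eventually.of_forall fun y => abs_nonneg _) hB
            filter_upwards with y
            rw [← mul_sub, abs_mul]
            exact mul_le_mul_of_nonneg_left (hSlip _ _ _ _) (abs_nonneg _)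
    set a := |u x - v x| * ∫ y, |K x y| ∂μ with ha
    set b := ∫ y, |K x y| * |u y - v y| ∂μ with hbdef
    have hsplit : ∫ y, |K x y| * (L_S * (|u x - v x| + |u y - v y|)) ∂μ = L_S * (a + b) := by
      have h : ∀ y, |K x y| * (L_S * (|u x - v x| + |u y - v y|))
          = L_S * (|K x y| * |u x - v x| + |K x y| * |u y - v y|) := fun y => by ring
      simp_rw [h]
      rw [integral_const_mul, integral_add (hIK.mul_const _) hIKw, integral_mul_const, ha, hbdef]
      ring
    have ha2 : a ^ 2 ≤ (u x - v x) ^ 2 * K₁ := by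
      have h1 : (∫ y, |K x y| ∂μ) ^ 2 ≤ ∫ y, |K x y| ^ 2 ∂μ := sq_int_le hKxA
      have h2 : ∫ y, |K x y| ^ 2 ∂μ = ∫ y, K x y ^ 2 ∂μ := by simp [sq_abs]
      have h3 : (∫ y, |K x y| ∂μ) ^ 2 ≤ K₁ := by
        rw [h2] at h1; exact h1.trans hx.2
      calc a ^ 2 = (u x - v x) ^ 2 * (∫ y, |K x y| ∂μ) ^ 2 := by
            rw [ha, mul_pow, sq_abs]
        _ ≤ (u x - v x) ^ 2 * K₁ := mul_le_mul_of_nonneg_left h3 (sq_nonneg _)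
    have hb2 : b ^ 2 ≤ ∫ y, K x y ^ 2 * (u y - v y) ^ 2 ∂μ := by
      have hmeas2 : AEStronglyMeasurable (fun y => |K x y| * |u y - v y|) μ :=
        (hKxm.abs.mul hwmeas.abs).aestronglyMeasurable
      have hm2 : MemLp (fun y => |K x y| * |u y - v y|) 2 μ := by
        rw [memLp_two_iff_integrable_sq hmeas2]
        simpa [mul_pow, sq_abs] using hfx
      have h := sq_int_le hm2
      rw [hbdef]
      refine h.trans (le_of_eq ?_)
      congr 1
      ext y
      rw [mul_pow, sq_abs, sq_abs]
    rw [hdiff]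
    have hle : |∫ y, (K x y * S (u x) (u y) - K x y * S (v x) (v y)) ∂μ| ≤ L_S * (a + b) :=
      hsplit ▸ habs
    have h0 : (∫ y, (K x y * S (u x) (u y) - K x y * S (v x) (v y)) ∂μ) ^ 2
        ≤ (L_S * (a + b)) ^ 2 := by
      rw [← sq_abs]
      exact pow_le_pow_left₀ (abs_nonneg _) hle 2
    refine h0.trans ?_
    nlinarith [sq_nonneg (a - b), sq_nonneg L_S, ha2, hb2,
      mul_le_mul_of_nonneg_left ha2 (sq_nonneg L_S),
      mul_le_mul_of_nonneg_left hb2 (sq_nonneg L_S),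
      mul_le_mul_of_nonneg_left (sq_nonneg (a - b)) (sq_nonneg L_S)]
  -- put it together
  calc ∫ x, ((∫ y, K x y * S (u x) (u y) ∂μ) - ∫ y, K x y * S (v x) (v y) ∂μ) ^ 2 ∂μ
      ≤ ∫ x, 2 * L_S ^ 2 * (K₁ * (u x - v x) ^ 2 + ∫ y, K x y ^ 2 * (u y - v y) ^ 2 ∂μ) ∂μ := by
        exact integral_mono_of_nonneg (Filter.Eventually.of_forall fun x => sq_nonneg _)
          (((hwsq.const_mul K₁).add hFI).const_mul _) hpt
    _ = 2 * L_S ^ 2 * (K₁ * ∫ x, (u x - v x) ^ 2 ∂μ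
          + ∫ x, (∫ y, K x y ^ 2 * (u y - v y) ^ 2 ∂μ) ∂μ) := by
        rw [integral_const_mul, integral_add (hwsq.const_mul K₁) hFI, integral_const_mul]
    _ ≤ 2 * L_S ^ 2 * (K₁ * ∫ x, (u x - v x) ^ 2 ∂μ + K₂ * ∫ x, (u x - v x) ^ 2 ∂μ) := by
        apply mul_le_mul_of_nonneg_left _ (by positivity)
        have h := hswap ▸ hinner
        linarith [hswap ▸ hinner]
    _ = 2 * L_S ^ 2 * (K₁ + K₂) * ∫ x, (u x - v x) ^ 2 ∂μ := by ring
end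
end

section
/- Let p ∈ [1,∞), let φ ∈ L^p(I^d), let n ≥ 1 be an integer, and let M ≥ 0 be such that for every h ∈ ℝ^d with |h| ≤ √d · n^{−1}, ∫_{{x ∈ I^d : x + h ∈ I^d}} |φ(x+h) − φ(x)|^p dx ≤ M^p. Then ∫_{I^d} |φ(x) − (P_n φ)(x)|^p dx ≤ C_d · M^p, where C_d = (π d)^{d/2} / Γ(d/2 + 1). -/
open MeasureTheory Set
open scoped ENNReal

noncomputable section

/-- The half-open dyadic-type cell `∏_l ((i_l−1)/n, i_l/n]` of the uniform partition of `I^d`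
into `n^d` cubes that contains the point `x` (here `i_l = ⌈n x_l⌉`). -/
def cellOf (d n : ℕ) (x : Fin d → ℝ) : Set (Fin d → ℝ) :=
  Set.univ.pi fun l => Set.Ioc (((⌈(n : ℝ) * x l⌉ : ℝ) - 1) / n) ((⌈(n : ℝ) * x l⌉ : ℝ) / n)

/-- The cell-averaging operator `P_n`: `(P_n φ)(x) = n^d ∫_{V_ī} φ(z) dz` for `x ∈ V_ī`.
It is the `L²`-orthogonal projection onto piecewise-constant functions on the cells. -/
def cellAvg (d n : ℕ) (φ : (Fin d → ℝ) → ℝ) (x : Fin d → ℝ) : ℝ :=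
  (n : ℝ) ^ d * ∫ z in cellOf d n x, φ z

/-- The Euclidean norm of `h ∈ ℝ^d`. -/
def euclNorm (d : ℕ) (h : Fin d → ℝ) : ℝ := Real.sqrt (∑ i, (h i) ^ 2)

/-- open-closed unit cube -/
def S' (d : ℕ) : Set (Fin d → ℝ) := Set.univ.pi fun _ => Set.Ioc (0:ℝ) 1

lemma measurableSet_S' (d : ℕ) : MeasurableSet (S' d) :=
  MeasurableSet.univ_pi fun _ => measurableSet_Ioc

lemma measurableSet_unitCube (d : ℕ) : MeasurableSet (unitCube d) := measurableSet_Icc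

lemma S'_subset (d : ℕ) : S' d ⊆ unitCube d := by
  intro x hx
  rw [unitCube, ← Set.pi_univ_Icc]
  exact fun l _ => Set.Ioc_subset_Icc_self (hx l trivial)

lemma cubeMeasure_eq (d : ℕ) : cubeMeasure d = volume.restrict (S' d) := by
  apply Measure.restrict_congr_set
  rw [MeasureTheory.ae_eq_set]
  refine ⟨measure_mono_null (t := ⋃ l : Fin d, {x : Fin d → ℝ | x l = 0}) (fun x hx => ?_)
    (measure_iUnion_null (fun l : Fin d => ?_)), ?_⟩
  · obtain ⟨hx1, hx2⟩ := hx
    simp only [S', Set.mem_pi, Set.mem_univ, forall_true_left, not_forall] at hx2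
    obtain ⟨l, hl⟩ := hx2
    have h0 : (0:Fin d → ℝ) ≤ x := hx1.1
    have h1 : x ≤ 1 := hx1.2
    have hl' : ¬ (0 < x l ∧ x l ≤ 1) := by simpa [Set.mem_Ioc] using hl
    have : x l = 0 := by
      rcases eq_or_lt_of_le (h0 l) with h | h
      · exact h.symm
      · exact absurd ⟨h, h1 l⟩ hl'
    exact Set.mem_iUnion.2 ⟨l, this⟩
  · rw [MeasureTheory.volume_pi]
    exact Measure.pi_hyperplane _ l 0
  · rw [Set.diff_eq_empty.2 (S'_subset d)]; simp

lemma mem_S'_iff {d : ℕ} {x : Fin d → ℝ} : x ∈ S' d ↔ ∀ l, 0 < x l ∧ x l ≤ 1 := by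
  simp [S', Set.mem_pi]

lemma mem_cellOf_self {d n : ℕ} (hn : 1 ≤ n) (x : Fin d → ℝ) : x ∈ cellOf d n x := by
  have hn0 : (0:ℝ) < n := by exact_mod_cast Nat.pos_of_ne_zero (by omega)
  intro l _
  constructor
  · rw [div_lt_iff₀ hn0, sub_lt_iff_lt_add, mul_comm]
    exact Int.ceil_lt_add_one _
  · rw [le_div_iff₀ hn0, mul_comm]
    exact Int.le_ceil _
  
lemma ceil_bounds {n : ℕ} (hn : 1 ≤ n) {t : ℝ} (ht : 0 < t) (ht1 : t ≤ 1) :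
    (1:ℤ) ≤ ⌈(n:ℝ) * t⌉ ∧ ⌈(n:ℝ) * t⌉ ≤ n := by
  have hn0 : (0:ℝ) < n := by positivity
  refine ⟨Int.ceil_pos.2 (by positivity), Int.ceil_le.2 ?_⟩
  push_cast
  nlinarith

lemma cellOf_subset_S' {d n : ℕ} (hn : 1 ≤ n) {x : Fin d → ℝ} (hx : x ∈ S' d) :
    cellOf d n x ⊆ S' d := by
  have hn0 : (0:ℝ) < n := by exact_mod_cast Nat.pos_of_ne_zero (by omega)
  intro z hz
  rw [mem_S'_iff]
  intro l
  have hxl := (mem_S'_iff.1 hx) l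
  obtain ⟨h1, h2⟩ := ceil_bounds hn hxl.1 hxl.2 (n := n) (t := x l)
  have hzl := hz l trivial
  constructor
  · refine lt_of_le_of_lt ?_ hzl.1
    apply div_nonneg _ hn0.le
    have : (1:ℝ) ≤ (⌈(n:ℝ) * x l⌉ : ℝ) := by exact_mod_cast h1
    linarith
  · refine le_trans hzl.2 ?_
    rw [div_le_one hn0]
    exact_mod_cast h2


lemma cellOf_subset_unitCube {d n : ℕ} (hn : 1 ≤ n) {x : Fin d → ℝ} (hx : x ∈ S' d) :
    cellOf d n x ⊆ unitCube d := (cellOf_subset_S' hn hx).trans (S'_subset d)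

lemma volume_cellOf (d n : ℕ) (x : Fin d → ℝ) :
    volume (cellOf d n x) = (ENNReal.ofReal ((n:ℝ)⁻¹)) ^ d := by
  rw [cellOf, volume_pi_pi]
  have : ∀ l : Fin d, volume (Set.Ioc (((⌈(n : ℝ) * x l⌉ : ℝ) - 1) / n) ((⌈(n : ℝ) * x l⌉ : ℝ) / n))
      = ENNReal.ofReal ((n:ℝ)⁻¹) := by
    intro l
    rw [Real.volume_Ioc]
    congr 1
    rw [div_sub_div_same]
    ring_nf
  simp [this]


lemma measurableSet_cellOf (d n : ℕ) (x : Fin d → ℝ) : MeasurableSet (cellOf d n x) :=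
  MeasurableSet.univ_pi fun _ => measurableSet_Ioc

lemma measurable_ceilVec (d n : ℕ) :
    Measurable (fun x : Fin d → ℝ => fun l => ⌈(n:ℝ) * x l⌉) :=
  measurable_pi_lambda _ fun l => (measurable_const.mul (measurable_pi_apply l)).ceil

lemma measurable_cellAvg (d n : ℕ) (φ : (Fin d → ℝ) → ℝ) : Measurable (cellAvg d n φ) := by
  have : cellAvg d n φ = (fun k : Fin d → ℤ =>
      (n : ℝ) ^ d * ∫ z in Set.univ.pi fun l =>
        Set.Ioc (((k l : ℝ) - 1) / n) ((k l : ℝ) / n), φ z) ∘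
      (fun x : Fin d → ℝ => fun l => ⌈(n:ℝ) * x l⌉) := rfl
  rw [this]
  exact (measurable_of_countable _).comp (measurable_ceilVec d n)

-- the measurable set of pairs
lemma measurableSet_pairSet (d n : ℕ) :
    MeasurableSet {q : (Fin d → ℝ) × (Fin d → ℝ) | q.1 + q.2 ∈ cellOf d n q.1} := by
  have : {q : (Fin d → ℝ) × (Fin d → ℝ) | q.1 + q.2 ∈ cellOf d n q.1} =
      ⋂ l : Fin d, ({q : (Fin d → ℝ) × (Fin d → ℝ) |
          ((⌈(n : ℝ) * q.1 l⌉ : ℝ) - 1) / n < q.1 l + q.2 l} ∩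
        {q | q.1 l + q.2 l ≤ (⌈(n : ℝ) * q.1 l⌉ : ℝ) / n}) := by
    ext q
    simp only [Set.mem_setOf_eq, Set.mem_iInter, Set.mem_inter_iff, cellOf, Set.mem_pi,
      Set.mem_univ, forall_true_left, Set.mem_Ioc, Pi.add_apply]
  rw [this]
  refine MeasurableSet.iInter fun l => (MeasurableSet.inter ?_ ?_)
  · apply measurableSet_lt
    · exact ((measurable_of_countable (fun k : ℤ => ((k:ℝ) - 1)/n)).comp
        ((measurable_const.mul ((measurable_pi_apply l).comp measurable_fst)).ceil))
    · exact ((measurable_pi_apply l).comp measurable_fst).add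
        ((measurable_pi_apply l).comp measurable_snd)
  · apply measurableSet_le
    · exact ((measurable_pi_apply l).comp measurable_fst).add
        ((measurable_pi_apply l).comp measurable_snd)
    · exact ((measurable_of_countable (fun k : ℤ => (k:ℝ)/n)).comp
        ((measurable_const.mul ((measurable_pi_apply l).comp measurable_fst)).ceil))

lemma euclNorm_le (d n : ℕ) (hn : 1 ≤ n) {x h : Fin d → ℝ}
    (hx : x ∈ cellOf d n x) (hxh : x + h ∈ cellOf d n x) :
    euclNorm d h ≤ Real.sqrt d / n := by
  have hn0 : (0:ℝ) < n := by exact_mod_cast Nat.pos_of_ne_zero (by omega)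
  have key : ∀ l, (h l)^2 ≤ ((n:ℝ)⁻¹)^2 := by
    intro l
    have h1 := hx l trivial
    have h2 := hxh l trivial
    simp only [Set.mem_Ioc, Pi.add_apply] at h1 h2
    have hlen : (⌈(n : ℝ) * x l⌉ : ℝ) / n - ((⌈(n : ℝ) * x l⌉ : ℝ) - 1) / n = (n:ℝ)⁻¹ := by
      field_simp
      ring
    have : |h l| ≤ (n:ℝ)⁻¹ := by
      rw [abs_le]
      constructor <;> nlinarith [h1.1, h1.2, h2.1, h2.2]
    calc (h l)^2 = |h l|^2 := (sq_abs _).symm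
    _ ≤ ((n:ℝ)⁻¹)^2 := by nlinarith [abs_nonneg (h l)]
  have hsum : ∑ i, (h i)^2 ≤ (d:ℝ) * ((n:ℝ)⁻¹)^2 := by
    calc ∑ i, (h i)^2 ≤ ∑ _i : Fin d, ((n:ℝ)⁻¹)^2 := Finset.sum_le_sum (fun i _ => key i)
    _ = (d:ℝ) * ((n:ℝ)⁻¹)^2 := by simp [mul_comm]
  calc euclNorm d h ≤ Real.sqrt ((d:ℝ) * ((n:ℝ)⁻¹)^2) := Real.sqrt_le_sqrt hsum
  _ = Real.sqrt d / n := by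
      rw [Real.sqrt_mul (by positivity), Real.sqrt_sq (by positivity)]
      field_simp

lemma measurableSet_B (d n : ℕ) : MeasurableSet {h : Fin d → ℝ | euclNorm d h ≤ Real.sqrt d / n} := by
  have : Continuous (euclNorm d) := by
    apply Real.continuous_sqrt.comp
    exact continuous_finset_sum _ fun i _ => (continuous_apply i).pow 2
  exact measurableSet_le this.measurable measurable_const

lemma volume_B (d n : ℕ) (hd : 1 ≤ d) :
    volume {h : Fin d → ℝ | euclNorm d h ≤ Real.sqrt d / n} =
      (ENNReal.ofReal (Real.sqrt d / n)) ^ d *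
        ENNReal.ofReal (Real.sqrt Real.pi ^ d / Real.Gamma (d / 2 + 1)) := by
  haveI : Nonempty (Fin d) := ⟨⟨0, by omega⟩⟩
  have hmp := EuclideanSpace.volume_preserving_symm_measurableEquiv_toLp (ι := Fin d)
  rw [← hmp.measure_preimage (measurableSet_B d n).nullMeasurableSet]
  have hpre : (MeasurableEquiv.toLp 2 (Fin d → ℝ)).symm ⁻¹'
      {h : Fin d → ℝ | euclNorm d h ≤ Real.sqrt d / n} =
      Metric.closedBall (0 : EuclideanSpace ℝ (Fin d)) (Real.sqrt d / n) := by
    ext y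
    simp only [Set.mem_preimage, Set.mem_setOf_eq, Metric.mem_closedBall, dist_zero_right]
    rw [EuclideanSpace.norm_eq]
    unfold euclNorm
    have : ∀ i : Fin d, ((MeasurableEquiv.toLp 2 (Fin d → ℝ)).symm y) i ^ 2 = ‖y i‖ ^ 2 := by
      intro i
      rw [Real.norm_eq_abs, sq_abs]
      rfl
    simp only [this]
  rw [hpre, EuclideanSpace.volume_closedBall]
  simp [Fintype.card_fin]

section
open Real

theorem convexOn_abs_rpow (p : ℝ) (hp : 1 ≤ p) : ConvexOn ℝ Set.univ (fun t : ℝ => |t| ^ p) := by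
  have himg : abs '' (Set.univ : Set ℝ) = Set.Ici 0 := by
    ext t
    constructor
    · rintro ⟨y, -, rfl⟩; exact abs_nonneg y
    · intro ht; exact ⟨t, trivial, abs_of_nonneg ht⟩
  have h1 : ConvexOn ℝ (abs '' (Set.univ : Set ℝ)) (fun t : ℝ => t ^ p) := by
    rw [himg]; exact convexOn_rpow hp
  have h2 : ConvexOn ℝ Set.univ (abs : ℝ → ℝ) := convexOn_univ_norm
  have h3 : MonotoneOn (fun t : ℝ => t ^ p) (abs '' Set.univ) := by
    intro a ha b hb hab
    rw [himg] at ha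
    exact Real.rpow_le_rpow ha hab (le_trans zero_le_one hp)
  exact h1.comp h2 h3

theorem continuous_abs_rpow (p : ℝ) (hp : 1 ≤ p) : Continuous (fun t : ℝ => |t| ^ p) :=
  (Real.continuous_rpow_const (le_trans zero_le_one hp)).comp continuous_abs

variable {d n : ℕ} {p : ℝ} {φ : (Fin d → ℝ) → ℝ}

lemma isFiniteMeasure_cell (d n : ℕ) (x : Fin d → ℝ) :
    IsFiniteMeasure (volume.restrict (cellOf d n x)) := by
  constructor
  rw [Measure.restrict_apply_univ, volume_cellOf]
  exact ENNReal.pow_lt_top ENNReal.ofReal_lt_top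

lemma neZero_cell (hn : 1 ≤ n) (x : Fin d → ℝ) :
    NeZero (volume.restrict (cellOf d n x)) := by
  have hn0 : (0:ℝ) < (n:ℝ)⁻¹ := by
    have : (0:ℝ) < n := by exact_mod_cast Nat.pos_of_ne_zero (by omega)
    positivity
  constructor
  rw [← Measure.measure_univ_ne_zero, Measure.restrict_apply_univ, volume_cellOf]
  have h0 : ENNReal.ofReal ((n:ℝ)⁻¹) ≠ 0 := by
    rw [Ne, ENNReal.ofReal_eq_zero, not_le]; exact hn0
  exact pow_ne_zero _ h0

lemma memLp_cell (hn : 1 ≤ n) (hφ : MemLp φ (ENNReal.ofReal p) (cubeMeasure d))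
    {x : Fin d → ℝ} (hx : x ∈ S' d) :
    MemLp φ (ENNReal.ofReal p) (volume.restrict (cellOf d n x)) := by
  have h := hφ.restrict (cellOf d n x)
  rwa [cubeMeasure, Measure.restrict_restrict_of_subset (cellOf_subset_unitCube hn hx)] at h

lemma average_cell (hn : 1 ≤ n) (x : Fin d → ℝ) (g : (Fin d → ℝ) → ℝ) :
    ⨍ z in cellOf d n x, g z = (n:ℝ)^d * ∫ z in cellOf d n x, g z := by
  have hn0 : (0:ℝ) < n := by exact_mod_cast Nat.pos_of_ne_zero (by omega)
  rw [average_eq, measureReal_def, Measure.restrict_apply_univ, volume_cellOf, smul_eq_mul]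
  congr 1
  rw [ENNReal.toReal_pow, ENNReal.toReal_ofReal (by positivity), inv_pow, inv_inv]

lemma integrable_diff_rpow (hn : 1 ≤ n) (hp : 1 ≤ p)
    (hφ : MemLp φ (ENNReal.ofReal p) (cubeMeasure d))
    {x : Fin d → ℝ} (hx : x ∈ S' d) :
    Integrable (fun z => |φ x - φ z| ^ p) (volume.restrict (cellOf d n x)) := by
  haveI := isFiniteMeasure_cell d n x
  have hp0 : (0:ℝ) < p := lt_of_lt_of_le one_pos hp
  have hmem : MemLp φ (ENNReal.ofReal p) (volume.restrict (cellOf d n x)) := memLp_cell hn hφ hx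
  have hmem2 : MemLp (fun z => φ x - φ z) (ENNReal.ofReal p)
      (volume.restrict (cellOf d n x)) := by
    have := (memLp_const (μ := volume.restrict (cellOf d n x)) (p := ENNReal.ofReal p)
      (φ x)).sub hmem
    exact this
  have := hmem2.integrable_norm_rpow (by simp [ENNReal.ofReal_eq_zero, not_le, hp0]) (by simp)
  simpa [ENNReal.toReal_ofReal hp0.le, Real.norm_eq_abs] using this

lemma jensen_cell (hn : 1 ≤ n) (hp : 1 ≤ p)
    (hφ : MemLp φ (ENNReal.ofReal p) (cubeMeasure d))
    {x : Fin d → ℝ} (hx : x ∈ S' d) :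
    |φ x - cellAvg d n φ x| ^ p ≤ (n:ℝ)^d * ∫ z in cellOf d n x, |φ x - φ z| ^ p := by
  haveI := isFiniteMeasure_cell d n x
  haveI := neZero_cell hn x
  have hp0 : (0:ℝ) < p := lt_of_lt_of_le one_pos hp
  have hq1 : (1:ℝ≥0∞) ≤ ENNReal.ofReal p := ENNReal.one_le_ofReal.2 hp
  have hmem : MemLp φ (ENNReal.ofReal p) (volume.restrict (cellOf d n x)) := memLp_cell hn hφ hx
  have hφint : Integrable φ (volume.restrict (cellOf d n x)) := hmem.integrable hq1
  have hfint : Integrable (fun z => φ x - φ z) (volume.restrict (cellOf d n x)) :=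
    (integrable_const _).sub hφint
  have hgint := integrable_diff_rpow hn hp hφ hx
  have hJ := (convexOn_abs_rpow p hp).map_average_le (μ := volume.restrict (cellOf d n x))
    (f := fun z => φ x - φ z)
    ((continuous_abs_rpow p hp).continuousOn) isClosed_univ
    (Filter.Eventually.of_forall fun z => trivial) hfint hgint
  have havg : ⨍ z in cellOf d n x, (φ x - φ z) = φ x - cellAvg d n φ x := by
    have hn0 : (0:ℝ) < n := by exact_mod_cast Nat.pos_of_ne_zero (by omega)
    rw [average_cell hn, integral_sub (integrable_const _) hφint, integral_const,
      measureReal_def, Measure.restrict_apply_univ, volume_cellOf, ENNReal.toReal_pow,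
      ENNReal.toReal_ofReal (by positivity), smul_eq_mul, cellAvg, mul_sub, ← mul_assoc,
      ← mul_pow, mul_inv_cancel₀ (by positivity : (n:ℝ) ≠ 0), one_pow, one_mul]
  rw [havg] at hJ
  calc |φ x - cellAvg d n φ x| ^ p ≤ ⨍ z in cellOf d n x, |φ x - φ z| ^ p := hJ
  _ = (n:ℝ)^d * ∫ z in cellOf d n x, |φ x - φ z| ^ p := average_cell hn x _


section
variable {d n : ℕ} {p M : ℝ} {φ : (Fin d → ℝ) → ℝ}

lemma volume_unitCube_lt_top (d : ℕ) : volume (unitCube d) < ⊤ := by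
  rw [unitCube, ← Set.pi_univ_Icc, volume_pi_pi]
  simp [Real.volume_Icc]

lemma measurableSet_Th (d : ℕ) (h : Fin d → ℝ) :
    MeasurableSet {x | x ∈ unitCube d ∧ x + h ∈ unitCube d} :=
  (measurableSet_unitCube d).inter
    ((measurableSet_unitCube d).preimage (measurable_id.add_const h))

lemma integrable_shift_diff (hp : 1 ≤ p) (hφm : Measurable φ)
    (hφ : MemLp φ (ENNReal.ofReal p) (cubeMeasure d)) (h : Fin d → ℝ) :
    Integrable (fun x => |φ (x + h) - φ x| ^ p)
      (volume.restrict {x | x ∈ unitCube d ∧ x + h ∈ unitCube d}) := by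
  set T := {x | x ∈ unitCube d ∧ x + h ∈ unitCube d} with hTdef
  have hT1 : T ⊆ unitCube d := fun x hx => hx.1
  haveI : IsFiniteMeasure (volume.restrict T) := by
    constructor
    rw [Measure.restrict_apply_univ]
    exact lt_of_le_of_lt (measure_mono hT1) (volume_unitCube_lt_top d)
  have hp0 : (0:ℝ) < p := lt_of_lt_of_le one_pos hp
  have hmem1 : MemLp φ (ENNReal.ofReal p) (volume.restrict T) := by
    have := hφ.restrict T
    rwa [cubeMeasure, Measure.restrict_restrict_of_subset hT1] at this
  have hmem2 : MemLp (fun x => φ (x + h)) (ENNReal.ofReal p) (volume.restrict T) := by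
    refine ⟨(hφm.comp (measurable_id.add_const h)).aestronglyMeasurable, ?_⟩
    have hmp : MeasurePreserving (fun x : Fin d → ℝ => x + h) volume volume :=
      measurePreserving_add_right volume h
    calc eLpNorm (fun x => φ (x + h)) (ENNReal.ofReal p) (volume.restrict T)
        ≤ eLpNorm (fun x => φ (x + h)) (ENNReal.ofReal p)
          (volume.restrict ((fun x : Fin d → ℝ => x + h) ⁻¹' unitCube d)) :=
          eLpNorm_mono_measure _ (Measure.restrict_mono (fun x hx => hx.2) le_rfl)
      _ = eLpNorm φ (ENNReal.ofReal p) (cubeMeasure d) := by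
          rw [cubeMeasure]
          exact eLpNorm_comp_measurePreserving hφ.1
            (hmp.restrict_preimage (measurableSet_unitCube d))
      _ < ⊤ := hφ.2
  have hmem3 : MemLp (fun x => φ (x + h) - φ x) (ENNReal.ofReal p) (volume.restrict T) := by
    have := hmem2.sub hmem1
    exact this
  have := hmem3.integrable_norm_rpow (by simp [ENNReal.ofReal_eq_zero, not_le, hp0]) (by simp)
  simpa [ENNReal.toReal_ofReal hp0.le, Real.norm_eq_abs] using this

lemma key_lintegral (hd : 1 ≤ d) (hn : 1 ≤ n) (hp : 1 ≤ p) (hM : 0 ≤ M)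
    (hφm : Measurable φ) (hφ : MemLp φ (ENNReal.ofReal p) (cubeMeasure d))
    (hmod : ∀ h : Fin d → ℝ, euclNorm d h ≤ Real.sqrt d / n →
      (∫ x in {x | x ∈ unitCube d ∧ x + h ∈ unitCube d}, |φ (x + h) - φ x| ^ p) ≤ M ^ p) :
    (∫⁻ x in S' d, ENNReal.ofReal (|φ x - cellAvg d n φ x| ^ p)) ≤
      ENNReal.ofReal ((Real.pi * d) ^ ((d : ℝ) / 2) / Real.Gamma ((d : ℝ) / 2 + 1) * M ^ p) := by
  have hp0 : (0:ℝ) < p := lt_of_lt_of_le one_pos hp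
  have hn0 : (0:ℝ) < n := by exact_mod_cast Nat.pos_of_ne_zero (by omega)
  set Tset : Set ((Fin d → ℝ) × (Fin d → ℝ)) :=
    {q | q.1 ∈ S' d ∧ q.1 + q.2 ∈ cellOf d n q.1} with hTset
  set F : ((Fin d → ℝ) × (Fin d → ℝ)) → ℝ≥0∞ :=
    Tset.indicator (fun q => ENNReal.ofReal (|φ q.1 - φ (q.1 + q.2)| ^ p)) with hFdef
  have hTmeas : MeasurableSet Tset := by
    rw [hTset]
    have : {q : (Fin d → ℝ) × (Fin d → ℝ) | q.1 ∈ S' d ∧ q.1 + q.2 ∈ cellOf d n q.1} =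
        (Prod.fst ⁻¹' S' d) ∩ {q : (Fin d → ℝ) × (Fin d → ℝ) | q.1 + q.2 ∈ cellOf d n q.1} := rfl
    rw [this]
    exact ((measurableSet_S' d).preimage measurable_fst).inter (measurableSet_pairSet d n)
  have hFmeas : Measurable F := by
    apply Measurable.indicator _ hTmeas
    exact ENNReal.measurable_ofReal.comp ((continuous_abs_rpow p hp).measurable.comp
      ((hφm.comp measurable_fst).sub (hφm.comp (measurable_fst.add measurable_snd))))
  -- step 1 : Jensen pointwise
  have step1 : (∫⁻ x in S' d, ENNReal.ofReal (|φ x - cellAvg d n φ x| ^ p)) ≤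
      ∫⁻ x in S' d, ENNReal.ofReal ((n:ℝ)^d) *
        ∫⁻ z in cellOf d n x, ENNReal.ofReal (|φ x - φ z| ^ p) := by
    refine setLIntegral_mono' (measurableSet_S' d) fun x hx => ?_
    calc ENNReal.ofReal (|φ x - cellAvg d n φ x| ^ p)
        ≤ ENNReal.ofReal ((n:ℝ)^d * ∫ z in cellOf d n x, |φ x - φ z| ^ p) :=
          ENNReal.ofReal_le_ofReal (jensen_cell hn hp hφ hx)
      _ = ENNReal.ofReal ((n:ℝ)^d) * ENNReal.ofReal (∫ z in cellOf d n x, |φ x - φ z| ^ p) :=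
          ENNReal.ofReal_mul (by positivity)
      _ = _ := by
          congr 1
          rw [← ofReal_integral_eq_lintegral_ofReal (integrable_diff_rpow hn hp hφ hx)
            (Filter.Eventually.of_forall fun z => by positivity)]
  -- step 2 : rewrite as double integral of F
  have step2 : (∫⁻ x in S' d, ∫⁻ z in cellOf d n x, ENNReal.ofReal (|φ x - φ z| ^ p)) =
      ∫⁻ x, ∫⁻ h, F (x, h) := by
    rw [← lintegral_indicator (measurableSet_S' d)]
    congr 1
    funext x
    by_cases hx : x ∈ S' d
    · rw [Set.indicator_of_mem hx]
      rw [← lintegral_indicator (measurableSet_cellOf d n x)]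
      rw [← lintegral_add_left_eq_self
        (fun z => (cellOf d n x).indicator (fun z => ENNReal.ofReal (|φ x - φ z| ^ p)) z) x]
      congr 1
      funext hh
      by_cases hc : x + hh ∈ cellOf d n x
      · rw [Set.indicator_of_mem hc, hFdef, Set.indicator_of_mem (show (x, hh) ∈ Tset from ⟨hx, hc⟩)]
      · rw [Set.indicator_of_notMem hc, hFdef,
          Set.indicator_of_notMem (show (x, hh) ∉ Tset from fun hq => hc hq.2)]
    · rw [Set.indicator_of_notMem hx]
      have hz : ∀ hh, F (x, hh) = 0 := fun hh =>
        Set.indicator_of_notMem (fun hq => hx hq.1) _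
      simp [hz]
  -- step 3 : swap
  have step3 : (∫⁻ x, ∫⁻ h, F (x, h)) = ∫⁻ h, ∫⁻ x, F (x, h) :=
    lintegral_lintegral_swap hFmeas.aemeasurable
  -- step 4 : bound inner integral
  have step4 : ∀ h : Fin d → ℝ, (∫⁻ x, F (x, h)) ≤
      ({h : Fin d → ℝ | euclNorm d h ≤ Real.sqrt d / n}).indicator
        (fun _ => ENNReal.ofReal (M ^ p)) h := by
    intro h
    by_cases hB : euclNorm d h ≤ Real.sqrt d / n
    · have hle : ∀ x, F (x, h) ≤
          ({x | x ∈ unitCube d ∧ x + h ∈ unitCube d}).indicator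
            (fun x => ENNReal.ofReal (|φ (x + h) - φ x| ^ p)) x := by
        intro x
        by_cases hq : (x, h) ∈ Tset
        · rw [hFdef, Set.indicator_of_mem hq]
          have hxT : x ∈ {x | x ∈ unitCube d ∧ x + h ∈ unitCube d} :=
            ⟨S'_subset d hq.1, S'_subset d (cellOf_subset_S' hn hq.1 hq.2)⟩
          rw [Set.indicator_of_mem hxT]
          rw [abs_sub_comm]
        · rw [hFdef, Set.indicator_of_notMem hq]
          exact zero_le
      calc (∫⁻ x, F (x, h)) ≤ ∫⁻ x, ({x | x ∈ unitCube d ∧ x + h ∈ unitCube d}).indicator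
            (fun x => ENNReal.ofReal (|φ (x + h) - φ x| ^ p)) x := lintegral_mono hle
        _ = ∫⁻ x in {x | x ∈ unitCube d ∧ x + h ∈ unitCube d},
              ENNReal.ofReal (|φ (x + h) - φ x| ^ p) := lintegral_indicator (measurableSet_Th d h) _
        _ = ENNReal.ofReal (∫ x in {x | x ∈ unitCube d ∧ x + h ∈ unitCube d},
              |φ (x + h) - φ x| ^ p) :=
            (ofReal_integral_eq_lintegral_ofReal (integrable_shift_diff hp hφm hφ h)
              (Filter.Eventually.of_forall fun x => by positivity)).symm
        _ ≤ ENNReal.ofReal (M ^ p) := ENNReal.ofReal_le_ofReal (hmod h hB)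
        _ = _ := (Set.indicator_of_mem
              (show h ∈ {h : Fin d → ℝ | euclNorm d h ≤ Real.sqrt d / n} from hB)
              (fun _ => ENNReal.ofReal (M ^ p))).symm
    · have hz : ∀ x, F (x, h) = 0 := by
        intro x
        apply Set.indicator_of_notMem
        rintro ⟨hx1, hx2⟩
        exact hB (euclNorm_le d n hn (mem_cellOf_self hn x) hx2)
      simp [hz]
  -- assemble
  calc (∫⁻ x in S' d, ENNReal.ofReal (|φ x - cellAvg d n φ x| ^ p))
      ≤ ∫⁻ x in S' d, ENNReal.ofReal ((n:ℝ)^d) *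
          ∫⁻ z in cellOf d n x, ENNReal.ofReal (|φ x - φ z| ^ p) := step1
    _ = ENNReal.ofReal ((n:ℝ)^d) *
          ∫⁻ x in S' d, ∫⁻ z in cellOf d n x, ENNReal.ofReal (|φ x - φ z| ^ p) :=
        lintegral_const_mul' _ _ (by simp)
    _ = ENNReal.ofReal ((n:ℝ)^d) * ∫⁻ h, ∫⁻ x, F (x, h) := by rw [step2, step3]
    _ ≤ ENNReal.ofReal ((n:ℝ)^d) * ∫⁻ h, ({h : Fin d → ℝ | euclNorm d h ≤ Real.sqrt d / n}).indicator
          (fun _ => ENNReal.ofReal (M ^ p)) h :=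
        mul_le_mul_right (lintegral_mono step4) _
    _ = ENNReal.ofReal ((n:ℝ)^d) * (ENNReal.ofReal (M ^ p) *
          volume {h : Fin d → ℝ | euclNorm d h ≤ Real.sqrt d / n}) := by
        rw [lintegral_indicator (measurableSet_B d n), setLIntegral_const]
    _ ≤ ENNReal.ofReal ((Real.pi * d) ^ ((d : ℝ) / 2) / Real.Gamma ((d : ℝ) / 2 + 1) * M ^ p) := by
        rw [volume_B d n hd]
        have hΓ : (0:ℝ) < Real.Gamma ((d:ℝ) / 2 + 1) := Real.Gamma_pos_of_pos (by positivity)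
        have hr : (0:ℝ) ≤ Real.sqrt d / n := by positivity
        have e1 : (ENNReal.ofReal (Real.sqrt d / n)) ^ d =
            ENNReal.ofReal ((Real.sqrt d / n) ^ d) := by
          rw [ENNReal.ofReal_pow hr]
        rw [e1, ← ENNReal.ofReal_mul (by positivity), ← ENNReal.ofReal_mul (by positivity),
          ← ENNReal.ofReal_mul (by positivity)]
        apply ENNReal.ofReal_le_ofReal
        have harith : (n:ℝ)^d * (M ^ p * ((Real.sqrt d / n) ^ d *
            (Real.sqrt Real.pi ^ d / Real.Gamma ((d:ℝ) / 2 + 1)))) =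
            (Real.sqrt d ^ d * Real.sqrt Real.pi ^ d / Real.Gamma ((d:ℝ) / 2 + 1)) * M ^ p := by
          field_simp
          have hnn : (n:ℝ)^d * ((n:ℝ)⁻¹)^d = 1 := by
            rw [← mul_pow, mul_inv_cancel₀ hn0.ne', one_pow]
          linear_combination (M ^ p * Real.sqrt d ^ d) * hnn
        rw [harith]
        have hkey : Real.sqrt d ^ d * Real.sqrt Real.pi ^ d = (Real.pi * d) ^ ((d : ℝ) / 2) := by
          rw [← mul_pow, ← Real.sqrt_mul (Nat.cast_nonneg d), mul_comm (d:ℝ) Real.pi,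
            Real.sqrt_eq_rpow, ← Real.rpow_natCast ((Real.pi * (d:ℝ)) ^ ((1:ℝ)/2)) d,
            ← Real.rpow_mul (by positivity)]
          congr 1
          ring
        rw [hkey]
end

end

lemma main_measurable (d n : ℕ) (hd : 1 ≤ d) (hn : 1 ≤ n)
    (p : ℝ) (hp : 1 ≤ p) (M : ℝ) (hM : 0 ≤ M)
    (φ : (Fin d → ℝ) → ℝ) (hφm : Measurable φ)
    (hφ : MemLp φ (ENNReal.ofReal p) (cubeMeasure d))
    (hmod : ∀ h : Fin d → ℝ, euclNorm d h ≤ Real.sqrt d / n →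
      (∫ x in {x | x ∈ unitCube d ∧ x + h ∈ unitCube d}, |φ (x + h) - φ x| ^ p) ≤ M ^ p) :
    (∫ x, |φ x - cellAvg d n φ x| ^ p ∂cubeMeasure d) ≤
      ((Real.pi * d) ^ ((d : ℝ) / 2) / Real.Gamma ((d : ℝ) / 2 + 1)) * M ^ p := by
  have hp0 : (0:ℝ) < p := lt_of_lt_of_le one_pos hp
  have hΓ : (0:ℝ) < Real.Gamma ((d:ℝ)/2+1) := Real.Gamma_pos_of_pos (by positivity)
  rw [cubeMeasure_eq]
  have hmeas : AEStronglyMeasurable (fun x => |φ x - cellAvg d n φ x| ^ p)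
      (volume.restrict (S' d)) :=
    ((continuous_abs_rpow p hp).measurable.comp
      (hφm.sub (measurable_cellAvg d n φ))).aestronglyMeasurable
  rw [integral_eq_lintegral_of_nonneg_ae (Filter.Eventually.of_forall fun x => by positivity) hmeas]
  have hkey := key_lintegral hd hn hp hM hφm hφ hmod
  calc (∫⁻ x in S' d, ENNReal.ofReal (|φ x - cellAvg d n φ x| ^ p)).toReal
      ≤ (ENNReal.ofReal ((Real.pi * d) ^ ((d : ℝ) / 2) / Real.Gamma ((d : ℝ) / 2 + 1)
          * M ^ p)).toReal := ENNReal.toReal_mono (by simp) hkey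
    _ = (Real.pi * d) ^ ((d : ℝ) / 2) / Real.Gamma ((d : ℝ) / 2 + 1) * M ^ p :=
        ENNReal.toReal_ofReal (by positivity)

/-- if the `L^p` modulus of continuity of `φ` at scale `√d/n` is at most `M`,
then `∫_{I^d} |φ − P_n φ|^p ≤ C_d M^p` with `C_d = (π d)^{d/2}/Γ(d/2+1)`. -/
theorem cellAvg_error_modulus_bound
    (d n : ℕ) (hd : 1 ≤ d) (hn : 1 ≤ n)
    (p : ℝ) (hp : 1 ≤ p) (M : ℝ) (hM : 0 ≤ M)
    (φ : (Fin d → ℝ) → ℝ) (hφ : MemLp φ (ENNReal.ofReal p) (cubeMeasure d))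
    (hmod : ∀ h : Fin d → ℝ, euclNorm d h ≤ Real.sqrt d / n →
      (∫ x in {x | x ∈ unitCube d ∧ x + h ∈ unitCube d}, |φ (x + h) - φ x| ^ p) ≤ M ^ p) :
    (∫ x, |φ x - cellAvg d n φ x| ^ p ∂cubeMeasure d) ≤
      ((Real.pi * d) ^ ((d : ℝ) / 2) / Real.Gamma ((d : ℝ) / 2 + 1)) * M ^ p := by
  set ψ := hφ.1.mk φ with hψdef
  have hψm : Measurable ψ := hφ.1.stronglyMeasurable_mk.measurable
  have haem : φ =ᵐ[cubeMeasure d] ψ := hφ.1.ae_eq_mk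
  have hψLp : MemLp ψ (ENNReal.ofReal p) (cubeMeasure d) := hφ.ae_eq haem
  have h0 : volume ({x | ¬ φ x = ψ x} ∩ unitCube d) = 0 := by
    have := ae_iff.1 haem
    rwa [cubeMeasure, Measure.restrict_apply' (measurableSet_unitCube d)] at this
  obtain ⟨N, hNsub, hNm, hN0⟩ := exists_measurable_superset_of_null h0
  -- transfer hmod to ψ
  have hmodψ : ∀ h : Fin d → ℝ, euclNorm d h ≤ Real.sqrt d / n →
      (∫ x in {x | x ∈ unitCube d ∧ x + h ∈ unitCube d}, |ψ (x + h) - ψ x| ^ p) ≤ M ^ p := by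
    intro h hh
    have e1 : ∀ᵐ x ∂(volume.restrict {x | x ∈ unitCube d ∧ x + h ∈ unitCube d}), φ x = ψ x := by
      apply ae_iff.2
      rw [Measure.restrict_apply' (measurableSet_Th d h)]
      refine measure_mono_null ?_ hN0
      rintro x ⟨hx1, hx2⟩
      exact hNsub ⟨hx1, hx2.1⟩
    have e2 : ∀ᵐ x ∂(volume.restrict {x | x ∈ unitCube d ∧ x + h ∈ unitCube d}),
        φ (x + h) = ψ (x + h) := by
      apply ae_iff.2
      rw [Measure.restrict_apply' (measurableSet_Th d h)]
      refine measure_mono_null (t := (fun x : Fin d → ℝ => x + h) ⁻¹' N) ?_ ?_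
      · rintro x ⟨hx1, hx2⟩
        exact hNsub ⟨hx1, hx2.2⟩
      · rw [(measurePreserving_add_right volume h).measure_preimage hNm.nullMeasurableSet]
        exact hN0
    have heq : (∫ x in {x | x ∈ unitCube d ∧ x + h ∈ unitCube d}, |ψ (x + h) - ψ x| ^ p)
        = ∫ x in {x | x ∈ unitCube d ∧ x + h ∈ unitCube d}, |φ (x + h) - φ x| ^ p := by
      apply integral_congr_ae
      filter_upwards [e1, e2] with x hx1 hx2
      rw [hx1, hx2]
    rw [heq]
    exact hmod h hh
  have hfinal := main_measurable d n hd hn p hp M hM ψ hψm hψLp hmodψ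
  have heq2 : (∫ x, |φ x - cellAvg d n φ x| ^ p ∂cubeMeasure d)
      = ∫ x, |ψ x - cellAvg d n ψ x| ^ p ∂cubeMeasure d := by
    rw [cubeMeasure_eq]
    apply integral_congr_ae
    have e1 : ∀ᵐ x ∂(volume.restrict (S' d)), φ x = ψ x := by
      apply ae_iff.2
      rw [Measure.restrict_apply' (measurableSet_S' d)]
      refine measure_mono_null ?_ hN0
      rintro x ⟨hx1, hx2⟩
      exact hNsub ⟨hx1, S'_subset d hx2⟩
    have e2 : ∀ᵐ x ∂(volume.restrict (S' d)), x ∈ S' d := ae_restrict_mem (measurableSet_S' d)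
    filter_upwards [e1, e2] with x hx1 hx2
    have hcell : cellAvg d n φ x = cellAvg d n ψ x := by
      rw [cellAvg, cellAvg]
      congr 1
      apply integral_congr_ae
      apply ae_iff.2
      rw [Measure.restrict_apply' (measurableSet_cellOf d n x)]
      refine measure_mono_null ?_ hN0
      rintro z ⟨hz1, hz2⟩
      exact hNsub ⟨hz1, cellOf_subset_unitCube hn hx2 hz2⟩
    rw [hx1, hcell]
  rw [heq2]
  exact hfinal

end
end

section
/- Let r ∈ (0,1), let n ≥ 1 be an integer, write x_j = j/n, and let x ∈ (x_{i−1}, x_i] for some i ∈ {1,…,n} with r < x_{i−1} and x_i < 1 − r. Then ∫₀¹ | 1_{(−r,r)}(x − y) − n ∫_{x_{i−1}}^{x_i} 1_{(−r,r)}(x' − y) dx' | dy ≤ 2/n. -/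
open MeasureTheory

lemma integral_band (y a b r : ℝ) (hab : a ≤ b) :
    (∫ x in a..b, (if |x - y| < r then (1:ℝ) else 0))
      = (volume (Set.Ioc a b ∩ Set.Ioo (y - r) (y + r))).toReal := by
  have h1 : ∀ x : ℝ, (if |x - y| < r then (1:ℝ) else 0)
      = Set.indicator (Set.Ioo (y - r) (y + r)) (fun _ => (1:ℝ)) x := by
    intro x
    simp only [Set.indicator_apply, Set.mem_Ioo]
    refine if_congr ?_ rfl rfl
    rw [abs_lt]
    constructor <;> rintro ⟨h₁, h₂⟩ <;> constructor <;> linarith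
  simp_rw [h1]
  rw [intervalIntegral.integral_of_le hab,
    MeasureTheory.setIntegral_indicator measurableSet_Ioo,
    MeasureTheory.setIntegral_const]
  simp
  rfl

lemma ind_intble (c d : ℝ) :
    MeasureTheory.Integrable (Set.indicator (Set.Icc c d) (fun _ => (1:ℝ))) volume := by
  rw [MeasureTheory.integrable_indicator_iff measurableSet_Icc]
  exact (MeasureTheory.integrableOn_const_iff (C := (1:ℝ))).mpr (Or.inr measure_Icc_lt_top)

lemma ind_int_le (c d : ℝ) (h : c ≤ d) :
    (∫ y in (0:ℝ)..1, Set.indicator (Set.Icc c d) (fun _ => (1:ℝ)) y) ≤ d - c := by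
  rw [intervalIntegral.integral_of_le (by norm_num : (0:ℝ) ≤ 1),
    MeasureTheory.setIntegral_indicator measurableSet_Icc,
    MeasureTheory.setIntegral_const]
  simp only [smul_eq_mul, mul_one]
  calc (volume (Set.Ioc 0 1 ∩ Set.Icc c d)).toReal
      ≤ (volume (Set.Icc c d)).toReal := by
        apply ENNReal.toReal_mono (by simp [Real.volume_Icc])
        exact measure_mono Set.inter_subset_right
    _ = d - c := by rw [Real.volume_Icc, ENNReal.toReal_ofReal (by linarith)]

/-- `L¹`-in-`y` cell-averaging error for the band-indicator kernel
`K(x,y) = 1_{|x−y|<r}`.  For `x` in an interior grid cell `(x_{i−1}, x_i]` with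
`r < x_{i−1}` and `x_i < 1 − r`,
`∫₀¹ |1_{(−r,r)}(x−y) − n ∫_{x_{i−1}}^{x_i} 1_{(−r,r)}(x'−y) dx'| dy ≤ 2/n`. -/
theorem band_kernel_cell_average_L1_error
    (r : ℝ) (hr : r ∈ Set.Ioo (0:ℝ) 1) (n : ℕ) (hn : 1 ≤ n)
    (i : ℕ) (hi1 : 1 ≤ i) (hi2 : i ≤ n) (x : ℝ)
    (hx : x ∈ Set.Ioc (((i : ℝ) - 1) / n) ((i : ℝ) / n))
    (hleft : r < ((i : ℝ) - 1) / n) (hright : (i : ℝ) / n < 1 - r) :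
    (∫ y in (0:ℝ)..1,
      |(if |x - y| < r then (1:ℝ) else 0) -
        (n : ℝ) * ∫ x' in (((i : ℝ) - 1) / n)..((i : ℝ) / n),
          (if |x' - y| < r then (1:ℝ) else 0)|) ≤ 2 / n := by
  obtain ⟨hr0, hr1⟩ := hr
  obtain ⟨hxa, hxb⟩ := hx
  set a : ℝ := ((i : ℝ) - 1) / n with ha
  set b : ℝ := (i : ℝ) / n with hb
  have hn0 : (0:ℝ) < n := by exact_mod_cast hn
  have hn0' : (n:ℝ) ≠ 0 := ne_of_gt hn0
  have hab : a ≤ b := by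
    rw [ha, hb, div_le_div_iff_of_pos_right hn0]
    linarith
  have hba : b - a = 1 / n := by rw [ha, hb]; field_simp; ring
  have hnba : (n:ℝ) * (b - a) = 1 := by rw [hba]; field_simp
  -- pointwise bound
  have hpoint : ∀ y : ℝ,
      |(if |x - y| < r then (1:ℝ) else 0) -
        (n : ℝ) * ∫ x' in a..b, (if |x' - y| < r then (1:ℝ) else 0)|
      ≤ Set.indicator (Set.Icc (a - r) (b - r)) (fun _ => (1:ℝ)) y
        + Set.indicator (Set.Icc (a + r) (b + r)) (fun _ => (1:ℝ)) y := by
    intro y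
    rw [integral_band y a b r hab]
    by_cases hy1 : y ∈ Set.Icc (a - r) (b - r)
    · -- bound by 1
      have hI0 : (0:ℝ) ≤ (volume (Set.Ioc a b ∩ Set.Ioo (y - r) (y + r))).toReal :=
        ENNReal.toReal_nonneg
      have hI1 : (volume (Set.Ioc a b ∩ Set.Ioo (y - r) (y + r))).toReal ≤ b - a := by
        calc (volume (Set.Ioc a b ∩ Set.Ioo (y - r) (y + r))).toReal
            ≤ (volume (Set.Ioc a b)).toReal := by
              apply ENNReal.toReal_mono (by simp [Real.volume_Ioc])
              exact measure_mono Set.inter_subset_left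
          _ = b - a := by rw [Real.volume_Ioc, ENNReal.toReal_ofReal (by linarith)]
      have h2 : Set.indicator (Set.Icc (a - r) (b - r)) (fun _ => (1:ℝ)) y = 1 :=
        Set.indicator_of_mem hy1 _
      have h3 : (0:ℝ) ≤ Set.indicator (Set.Icc (a + r) (b + r)) (fun _ => (1:ℝ)) y :=
        Set.indicator_nonneg (by intro _ _; norm_num) y
      rw [h2]
      have hg0 : 0 ≤ (n:ℝ) * (volume (Set.Ioc a b ∩ Set.Ioo (y - r) (y + r))).toReal :=
        mul_nonneg (le_of_lt hn0) hI0
      have hg1 : (n:ℝ) * (volume (Set.Ioc a b ∩ Set.Ioo (y - r) (y + r))).toReal ≤ 1 := by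
        calc (n:ℝ) * _ ≤ (n:ℝ) * (b - a) := by
              exact mul_le_mul_of_nonneg_left hI1 (le_of_lt hn0)
          _ = 1 := hnba
      rw [abs_le]
      constructor <;> split <;> linarith
    · by_cases hy2 : y ∈ Set.Icc (a + r) (b + r)
      · -- bound by 1 again
        have hI0 : (0:ℝ) ≤ (volume (Set.Ioc a b ∩ Set.Ioo (y - r) (y + r))).toReal :=
          ENNReal.toReal_nonneg
        have hI1 : (volume (Set.Ioc a b ∩ Set.Ioo (y - r) (y + r))).toReal ≤ b - a := by
          calc (volume (Set.Ioc a b ∩ Set.Ioo (y - r) (y + r))).toReal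
              ≤ (volume (Set.Ioc a b)).toReal := by
                apply ENNReal.toReal_mono (by simp [Real.volume_Ioc])
                exact measure_mono Set.inter_subset_left
            _ = b - a := by rw [Real.volume_Ioc, ENNReal.toReal_ofReal (by linarith)]
        have h2 : Set.indicator (Set.Icc (a + r) (b + r)) (fun _ => (1:ℝ)) y = 1 :=
          Set.indicator_of_mem hy2 _
        have h3 : (0:ℝ) ≤ Set.indicator (Set.Icc (a - r) (b - r)) (fun _ => (1:ℝ)) y :=
          Set.indicator_nonneg (by intro _ _; norm_num) y
        rw [h2]
        have hg1 : (n:ℝ) * (volume (Set.Ioc a b ∩ Set.Ioo (y - r) (y + r))).toReal ≤ 1 := by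
          calc (n:ℝ) * _ ≤ (n:ℝ) * (b - a) :=
                mul_le_mul_of_nonneg_left hI1 (le_of_lt hn0)
            _ = 1 := hnba
        have hg0 : 0 ≤ (n:ℝ) * (volume (Set.Ioc a b ∩ Set.Ioo (y - r) (y + r))).toReal :=
          mul_nonneg (le_of_lt hn0) hI0
        rw [abs_le]
        constructor <;> split <;> linarith
      · -- the difference vanishes
        simp only [Set.mem_Icc, not_and_or, not_le] at hy1 hy2
        rw [Set.indicator_of_notMem (by simp only [Set.mem_Icc, not_and_or, not_le]; exact hy1) _,
          Set.indicator_of_notMem (by simp only [Set.mem_Icc, not_and_or, not_le]; exact hy2) _]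
        have hzero : |(if |x - y| < r then (1:ℝ) else 0) -
            (n : ℝ) * (volume (Set.Ioc a b ∩ Set.Ioo (y - r) (y + r))).toReal| = 0 := by
          rcases hy1 with h1 | h1
          · -- y < a - r : both terms 0
            have hf : ¬ |x - y| < r := by
              rw [abs_lt]; push_neg; intro _; linarith
            have hempty : Set.Ioc a b ∩ Set.Ioo (y - r) (y + r) = ∅ := by
              rw [Set.eq_empty_iff_forall_notMem]
              rintro z ⟨⟨hz1, _⟩, ⟨_, hz4⟩⟩
              linarith
            rw [hempty]
            simp [hf]
          · rcases hy2 with h2 | h2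
            · -- b - r < y < a + r : both terms 1
              have hf : |x - y| < r := by rw [abs_lt]; constructor <;> linarith
              have hfull : Set.Ioc a b ∩ Set.Ioo (y - r) (y + r) = Set.Ioc a b := by
                rw [Set.inter_eq_left]
                rintro z ⟨hz1, hz2⟩
                exact ⟨by linarith, by linarith⟩
              rw [hfull, Real.volume_Ioc, ENNReal.toReal_ofReal (by linarith)]
              simp [hf, hnba]
            · -- y > b + r : both terms 0
              have hf : ¬ |x - y| < r := by
                rw [abs_lt]; push_neg; intro h; exfalso; linarith
              have hempty : Set.Ioc a b ∩ Set.Ioo (y - r) (y + r) = ∅ := by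
                rw [Set.eq_empty_iff_forall_notMem]
                rintro z ⟨⟨_, hz2⟩, ⟨hz3, _⟩⟩
                linarith
              rw [hempty]
              simp [hf]
        rw [hzero]
        norm_num
  -- now compare integrals
  by_cases hint : IntervalIntegrable (fun y =>
      |(if |x - y| < r then (1:ℝ) else 0) -
        (n : ℝ) * ∫ x' in a..b, (if |x' - y| < r then (1:ℝ) else 0)|) volume 0 1
  · have hG1 : IntervalIntegrable
        (Set.indicator (Set.Icc (a - r) (b - r)) (fun _ => (1:ℝ))) volume 0 1 :=
      (ind_intble _ _).intervalIntegrable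
    have hG2 : IntervalIntegrable
        (Set.indicator (Set.Icc (a + r) (b + r)) (fun _ => (1:ℝ))) volume 0 1 :=
      (ind_intble _ _).intervalIntegrable
    calc (∫ y in (0:ℝ)..1,
        |(if |x - y| < r then (1:ℝ) else 0) -
          (n : ℝ) * ∫ x' in a..b, (if |x' - y| < r then (1:ℝ) else 0)|)
        ≤ ∫ y in (0:ℝ)..1,
            (Set.indicator (Set.Icc (a - r) (b - r)) (fun _ => (1:ℝ)) y
              + Set.indicator (Set.Icc (a + r) (b + r)) (fun _ => (1:ℝ)) y) := by
          apply intervalIntegral.integral_mono_on (by norm_num) hint (hG1.add hG2)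
          intro y _
          exact hpoint y
      _ = (∫ y in (0:ℝ)..1, Set.indicator (Set.Icc (a - r) (b - r)) (fun _ => (1:ℝ)) y)
            + ∫ y in (0:ℝ)..1, Set.indicator (Set.Icc (a + r) (b + r)) (fun _ => (1:ℝ)) y :=
          intervalIntegral.integral_add hG1 hG2
      _ ≤ ((b - r) - (a - r)) + ((b + r) - (a + r)) := by
          gcongr
          · exact ind_int_le _ _ (by linarith)
          · exact ind_int_le _ _ (by linarith)
      _ ≤ 2 / n := by
          have : (b - r) - (a - r) = 1 / n := by rw [← hba]; ring
          have h2 : (b + r) - (a + r) = 1 / n := by rw [← hba]; ring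
          rw [this, h2]; ring_nf; rfl
  · rw [intervalIntegral.integral_undef hint]
    positivity
end
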